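/- arXiv:2101.01798 — 2 statements merged into one kernel-verified Lean document; each statement's English description precedes it below -/
import Mathlib

section
/- For λ = 2/5 and μ = 9/10, with X = [x₀, 1] × [y₀, 1] where (x₀, y₀) is the fixed point of T₀∘T₁, the sets (T₀∘T₁)(X) and T₁(X) are disjoint. -/
/-! The two images are already separated by their second coordinates: on `X` one has
`y ≤ 1`, so `T₀ ∘ T₁` sends it to height at most `μ = 9/10`, while `y ≥ y₀ = 27/32`,
so `T₁` sends it to height at least `λ y₀ + 1 - λ = 15/16`. -/

theorem stmt5 (T0 T1 : ℝ × ℝ → ℝ × ℝ)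
    (hT0 : ∀ p : ℝ × ℝ, T0 p = ((2 / 5 : ℝ) * p.1, (9 / 10 : ℝ) * p.2))
    (hT1 : ∀ p : ℝ × ℝ, T1 p = ((9 / 10 : ℝ) * p.1 + 1 - 9 / 10,
      (2 / 5 : ℝ) * p.2 + 1 - 2 / 5)) :
    let l : ℝ := 2 / 5
    let m : ℝ := 9 / 10
    let x0 : ℝ := l * (m - 1) / (l * m - 1)
    let y0 : ℝ := m * (l - 1) / (l * m - 1)
    let X : Set (ℝ × ℝ) := Set.Icc x0 1 ×ˢ Set.Icc y0 1
    Disjoint ((T0 ∘ T1) '' X) (T1 '' X) := by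
  intro l m x0 y0 X
  have hy0 : y0 = 27 / 32 := by norm_num [y0, l, m]
  refine Set.disjoint_image_image fun p hp q hq hpq => ?_
  have hsnd := congrArg Prod.snd hpq
  simp only [Function.comp_apply, hT0, hT1] at hsnd
  have hp_le : p.2 ≤ 1 := hp.2.2
  have hq_ge : 27 / 32 ≤ q.2 := hy0 ▸ hq.2.1
  linarith
end

section
/- For (λ, μ) ∈ [3/8, 7/16] × [7/8, 15/16], the fixed point (x₁, y₁) = (λ(μ−1)/(λμ−1), μ(λ−1)/(λμ−1)) of T₀∘T₁ satisfies x₁ + y₁ < 1, and its image under T₁ has coordinate-sum (λ+μ−2)/(λμ−1) > 1, and moreover x₁ < 1−μ and y₁ > 1−λ. -/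
/-!
The denominator `l * m - 1` is negative, so clearing it turns the first two inequalities into
`(1 - l) * (1 - m) > 0`, the third into `l * (m + 1) < 1` and the fourth into `m * (l + 1) > 1`.
On the box these hold because `7/16 * 31/16 < 1` and `7/8 * 11/8 > 1`.
-/

section FixedPoint

variable {l m : ℝ}

lemma fixedPoint_add_lt_one (hl : l < 1) (hm : m < 1) (hlm : l * m < 1) :
    l * (m - 1) / (l * m - 1) + m * (l - 1) / (l * m - 1) < 1 := by
  rw [← add_div, div_lt_one_of_neg (by linarith)]
  nlinarith [mul_pos (sub_pos.2 hl) (sub_pos.2 hm)]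

lemma one_lt_image_add (hl : l < 1) (hm : m < 1) (hlm : l * m < 1) :
    1 < (l + m - 2) / (l * m - 1) := by
  rw [lt_div_iff_of_neg (by linarith)]
  nlinarith [mul_pos (sub_pos.2 hl) (sub_pos.2 hm)]

lemma fixedPoint_fst_lt (hm : m < 1) (hlm : l * m < 1) (h : l * (m + 1) < 1) :
    l * (m - 1) / (l * m - 1) < 1 - m := by
  rw [div_lt_iff_of_neg (by linarith)]
  nlinarith [mul_pos (sub_pos.2 hm) (sub_pos.2 h)]

lemma fixedPoint_snd_gt (hl : l < 1) (hlm : l * m < 1) (h : 1 < m * (l + 1)) :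
    m * (l - 1) / (l * m - 1) > 1 - l := by
  rw [gt_iff_lt, lt_div_iff_of_neg (by linarith)]
  nlinarith [mul_pos (sub_pos.2 hl) (sub_pos.2 h)]

end FixedPoint

theorem stmt16 (l m : ℝ)
    (hl : l ∈ Set.Icc (3 / 8 : ℝ) (7 / 16)) (hm : m ∈ Set.Icc (7 / 8 : ℝ) (15 / 16)) :
    l * (m - 1) / (l * m - 1) + m * (l - 1) / (l * m - 1) < 1 ∧
    1 < (l + m - 2) / (l * m - 1) ∧
    l * (m - 1) / (l * m - 1) < 1 - m ∧
    m * (l - 1) / (l * m - 1) > 1 - l := by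
  obtain ⟨hl₀, hl₁⟩ := hl
  obtain ⟨hm₀, hm₁⟩ := hm
  have hl1 : l < 1 := by linarith
  have hm1 : m < 1 := by linarith
  have hlm : l * m < 1 := by nlinarith
  exact ⟨fixedPoint_add_lt_one hl1 hm1 hlm, one_lt_image_add hl1 hm1 hlm,
    fixedPoint_fst_lt hm1 hlm (by nlinarith), fixedPoint_snd_gt hl1 hlm (by nlinarith)⟩
end
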